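/- arXiv:math/0608575 — 3 statements merged into one kernel-verified Lean document; each statement's English description precedes it below -/
import Mathlib

section
/- The group G = S(ℕ) has the SUC fixed point property: every nonempty compact SUC G-flow X contains a point x with g•x = x for all g ∈ G. -/
open Filter Topology

/-- The Polish group `S(ℕ)` of permutations of `ℕ` with the topology of pointwise
convergence (the subspace topology inherited from `ℕ^ℕ` with `ℕ` discrete). -/
instance : TopologicalSpace (Equiv.Perm ℕ) :=
  TopologicalSpace.induced (fun σ : Equiv.Perm ℕ => (σ : ℕ → ℕ)) Pi.topologicalSpace

variable (G : Type) [Group G] [TopologicalSpace G]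

/-- A compact (more generally, uniform) `G`-flow is strongly uniformly continuous (SUC). -/
def IsSUCFlow (X : Type) [UniformSpace X] [MulAction G X] : Prop :=
  ∀ x₀ : X, ∀ ε ∈ uniformity X, ∃ U ∈ nhds (1 : G), ∀ g : G, ∀ u ∈ U,
    (g • u • x₀, g • x₀) ∈ ε

/-!
By compactness it suffices to find, for every entourage `W`, a point that every permutation moves
by at most `W`. Call a finite `F ⊆ ℕ` a `V`-modulus of `x` if the permutations fixing `F` pointwise
move every translate of `x` by at most `V`; SUC says that every point has one. Since
`Sym(ℕ) = G_A G_B G_A` for the pointwise stabilizers of disjoint finite sets `A`, `B`, a point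
with two disjoint `V`-moduli is moved by at most `V ○ V ○ V` by every permutation.

Such a point exists in a minimal subflow `M`: by Baire category some open `O` meets `M` in points
sharing a modulus `F₀`, finitely many translates `g⁻¹ O` cover `M`, so every point of `M` has a
modulus inside the finite set `D = ⋃ g⁻¹ F₀`; if `y ∈ O ∩ M` and `σ` moves `F₀` off `D`, then
`σ • y` also has the modulus `σ F₀`, which is disjoint from `D`.
-/

open Equiv Set Uniformity
open scoped SetRel

theorem Set.InjOn.exists_perm_eqOn {α : Type*} {s : Set α} {f : α → α} (hf : InjOn f s)
    (hs : s.Finite) : ∃ σ : Perm α, EqOn σ f s := by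
  classical
  have : Finite {x | x ∈ s} := hs.to_subtype
  refine ⟨(hf.bijOn_image.equiv f).extendSubtype, fun x hx => ?_⟩
  rw [Equiv.extendSubtype_apply_of_mem _ _ hx]
  rfl

theorem exists_perm_fixing_avoiding {α : Type*} [Infinite α] {A B S : Set α}
    (hA : A.Finite) (hB : B.Finite) (hS : S.Finite) (hAB : Disjoint A B) :
    ∃ a : Perm α, (∀ x ∈ A, a x = x) ∧ ∀ x ∈ S, a x ∉ B := by
  classical
  induction S, hS using Set.Finite.induction_on with
  | empty => exact ⟨1, fun _ _ => rfl, fun _ h => h.elim⟩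
  | @insert s S _ hS ih =>
    obtain ⟨a, haA, haS⟩ := ih
    by_cases has : a s ∈ B
    · obtain ⟨c, hc⟩ := (hA.union (hB.union (hS.image a))).infinite_compl.nonempty
      simp only [mem_compl_iff, mem_union, mem_image, not_or] at hc
      refine ⟨swap (a s) c * a, fun x hx => ?_, ?_⟩
      · rw [Perm.mul_apply, haA x hx, swap_apply_of_ne_of_ne]
        · rintro rfl; exact hAB.notMem_of_mem_left hx has
        · rintro rfl; exact hc.1 hx
      · rintro x (rfl | hx)
        · simpa using hc.2.1
        · rw [Perm.mul_apply, swap_apply_of_ne_of_ne]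
          · exact haS x hx
          · exact fun h => haS x hx (h ▸ has)
          · exact fun h => hc.2.2 ⟨x, hx, h⟩
    · exact ⟨a, haA, by rintro x (rfl | hx); exacts [has, haS x hx]⟩

theorem exists_perm_fixing_mul_fixing_mul_fixing {α : Type*} [Infinite α] {A B : Set α}
    (hA : A.Finite) (hB : B.Finite) (hAB : Disjoint A B) (u : Perm α) :
    ∃ a b r : Perm α, (∀ x ∈ A, a x = x) ∧ (∀ x ∈ B, b x = x) ∧ (∀ x ∈ A, r x = x) ∧
      a * b * r = u := by
  classical
  -- `c` fixes `A` and moves `u '' A` off `B`, so `c ∘ u` on `A` and `id` on `B` glue injectively.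
  obtain ⟨c, hcA, hcB⟩ := exists_perm_fixing_avoiding hA hB (hA.image u) hAB
  have hinj : InjOn (B.piecewise id (c ∘ u)) (A ∪ B) := by
    rintro x hx y hy hxy
    by_cases hxB : x ∈ B <;> by_cases hyB : y ∈ B <;>
      simp only [piecewise_eq_of_mem, piecewise_eq_of_notMem, hxB, hyB, not_false_eq_true,
        id, Function.comp] at hxy
    · exact hxy
    · exact absurd (hxy ▸ hxB) (hcB _ (mem_image_of_mem u (hy.resolve_right hyB)))
    · exact absurd (hxy ▸ hyB) (hcB _ (mem_image_of_mem u (hx.resolve_right hxB)))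
    · exact u.injective (c.injective hxy)
  obtain ⟨b, hb⟩ := hinj.exists_perm_eqOn (hA.union hB)
  refine ⟨c⁻¹, b, (c⁻¹ * b)⁻¹ * u, fun x hx => ?_, fun x hx => ?_, fun x hx => ?_, by group⟩
  · rw [Perm.inv_eq_iff_eq, hcA x hx]
  · rw [hb (Or.inr hx), piecewise_eq_of_mem _ _ _ hx]; rfl
  · rw [Perm.mul_apply, Perm.inv_eq_iff_eq, Perm.mul_apply, hb (Or.inl hx),
      piecewise_eq_of_notMem _ _ _ (hAB.notMem_of_mem_left hx)]
    simp

theorem exists_finset_fixing_subset_of_mem_nhds_one {U : Set (Perm ℕ)} (hU : U ∈ 𝓝 1) :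
    ∃ F : Finset ℕ, ∀ σ : Perm ℕ, (∀ i ∈ F, σ i = i) → σ ∈ U := by
  rw [nhds_induced] at hU
  obtain ⟨S, hS, hSU⟩ := hU
  rw [nhds_pi, Filter.mem_pi'] at hS
  obtain ⟨F, t, ht, hFS⟩ := hS
  refine ⟨F, fun σ hσ => hSU (hFS fun i hi => ?_)⟩
  have hti := ht i
  rw [nhds_discrete, mem_pure] at hti
  simpa [hσ i hi] using hti

def IsSUCModulus {α X : Type*} [MulAction (Perm α) X] (V : SetRel X X) (F : Set α) (x : X) :
    Prop :=
  ∀ h u : Perm α, (∀ i ∈ F, u i = i) → ((h * u) • x, h • x) ∈ V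

section Modulus

variable {α X : Type*} [MulAction (Perm α) X] {V : SetRel X X} {F : Set α} {x : X}

theorem IsSUCModulus.smul (hx : IsSUCModulus V F x) (g : Perm α) :
    IsSUCModulus V (g '' F) (g • x) := by
  intro h u hu
  have hconj : ∀ i ∈ F, (g⁻¹ * u * g) i = i := fun i hi => by
    simp [hu (g i) (mem_image_of_mem g hi)]
  simpa [← mul_smul, mul_assoc] using hx (h * g) (g⁻¹ * u * g) hconj

theorem IsSUCModulus.smul_mem_comp_comp [Infinite α] {A B : Set α} (hA : IsSUCModulus V A x)
    (hB : IsSUCModulus V B x) (hAf : A.Finite) (hBf : B.Finite) (hAB : Disjoint A B)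
    (u : Perm α) : (u • x, x) ∈ V ○ (V ○ V) := by
  obtain ⟨a, b, r, ha, hb, hr, rfl⟩ := exists_perm_fixing_mul_fixing_mul_fixing hAf hBf hAB u
  exact ⟨(a * b) • x, hA (a * b) r hr, a • x, hB a b hb, by simpa using hA 1 a ha⟩

theorem isClosed_setOf_isSUCModulus [TopologicalSpace X] [ContinuousConstSMul (Perm α) X]
    (hV : IsClosed V) (F : Set α) : IsClosed {x : X | IsSUCModulus V F x} := by
  simp only [IsSUCModulus, ofPred_forall]
  exact isClosed_iInter fun h => isClosed_iInter fun u => isClosed_iInter fun _ =>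
    hV.preimage (by fun_prop)

end Modulus

theorem IsSUCFlow.exists_isSUCModulus {X : Type} [UniformSpace X] [MulAction (Perm ℕ) X]
    (hX : IsSUCFlow (Perm ℕ) X) {V : SetRel X X} (hV : V ∈ 𝓤 X) (x : X) :
    ∃ F : Finset ℕ, IsSUCModulus V (F : Set ℕ) x := by
  obtain ⟨U, hU, hUV⟩ := hX x V hV
  obtain ⟨F, hF⟩ := exists_finset_fixing_subset_of_mem_nhds_one hU
  exact ⟨F, fun h u hu => by simpa [mul_smul] using hUV h u (hF u hu)⟩

def IsSubflow (Γ : Type*) {X : Type*} [TopologicalSpace X] [SMul Γ X] (M : Set X) : Prop :=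
  M.Nonempty ∧ IsClosed M ∧ ∀ g : Γ, MapsTo (g • ·) M M

section Subflow

variable (Γ : Type*) {X : Type*} [Monoid Γ] [TopologicalSpace X] [MulAction Γ X]

theorem exists_minimal_isSubflow [CompactSpace X] [Nonempty X] :
    ∃ M : Set X, Minimal (IsSubflow Γ) M := by
  have hchain : ∀ c ⊆ {M | IsSubflow Γ M}, IsChain (· ⊆ ·) c → c.Nonempty →
      ∃ lb ∈ {M : Set X | IsSubflow Γ M}, ∀ s ∈ c, lb ⊆ s := by
    intro c hc hchain hne
    have : Nonempty c := hne.to_subtype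
    refine ⟨⋂₀ c, ⟨?_, isClosed_sInter fun M hM => (hc hM).2.1, fun g x hx M hM =>
      (hc hM).2.2 g (hx M hM)⟩, fun M hM => sInter_subset_of_mem hM⟩
    exact IsCompact.nonempty_sInter_of_directed_nonempty_isCompact_isClosed
      (IsChain.directedOn (r := fun s t : Set X => s ⊇ t) hchain.symm)
      (fun M hM => (hc hM).1) (fun M hM => (hc hM).2.1.isCompact) fun M hM => (hc hM).2.1
  obtain ⟨M, -, hM⟩ := zorn_superset_nonempty _ hchain univ
    ⟨univ_nonempty, isClosed_univ, fun _ => mapsTo_univ _ _⟩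
  exact ⟨M, hM⟩

variable {Γ} [ContinuousConstSMul Γ X]

theorem Minimal.exists_finset_subset_iUnion_preimage_smul [CompactSpace X] {M O : Set X}
    (hM : Minimal (IsSubflow Γ) M) (hO : IsOpen O) (hOM : (O ∩ M).Nonempty) :
    ∃ I : Finset Γ, M ⊆ ⋃ g ∈ I, (g • ·) ⁻¹' O := by
  have hreturn : ∀ y ∈ M, ∃ g : Γ, g • y ∈ O := by
    intro y hy
    have horbit : IsSubflow Γ (closure (range fun g : Γ => g • y)) := by
      refine ⟨⟨y, subset_closure ⟨1, one_smul Γ y⟩⟩, isClosed_closure, fun g => ?_⟩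
      refine MapsTo.closure ?_ (continuous_const_smul g)
      rintro _ ⟨h, rfl⟩
      exact ⟨g * h, mul_smul g h y⟩
    have hMsub : M ⊆ closure (range fun g : Γ => g • y) :=
      hM.le_of_le horbit (closure_minimal (range_subset_iff.2 fun g => hM.prop.2.2 g hy)
        hM.prop.2.1)
    obtain ⟨w, hwO, hwM⟩ := hOM
    obtain ⟨_, hO', g, rfl⟩ := mem_closure_iff.1 (hMsub hwM) O hO hwO
    exact ⟨g, hO'⟩
  refine hM.prop.2.1.isCompact.elim_finite_subcover _
    (fun g => hO.preimage (continuous_const_smul g)) fun y hy => mem_iUnion.2 (hreturn y hy)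

end Subflow

theorem IsCompact.exists_isOpen_inter_subset_of_subset_iUnion {X ι : Type*} [TopologicalSpace X]
    [T2Space X] [Countable ι] {M : Set X} (hM : IsCompact M) (hne : M.Nonempty)
    {f : ι → Set X} (hf : ∀ i, IsClosed (f i)) (hcover : M ⊆ ⋃ i, f i) :
    ∃ i, ∃ O : Set X, IsOpen O ∧ (O ∩ M).Nonempty ∧ O ∩ M ⊆ f i := by
  have : CompactSpace M := isCompact_iff_compactSpace.mp hM
  have : Nonempty M := hne.to_subtype
  obtain ⟨i, y, hy⟩ := nonempty_interior_of_iUnion_of_closed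
    (f := fun i => ((↑) : M → X) ⁻¹' f i) (fun i => (hf i).preimage continuous_subtype_val)
    (eq_univ_of_forall fun x => by simpa using hcover x.2)
  obtain ⟨O, hO, hOeq⟩ := isOpen_induced_iff.mp (isOpen_interior (s := ((↑) : M → X) ⁻¹' f i))
  refine ⟨i, O, hO, ⟨y, (hOeq ▸ hy : y ∈ ((↑) : M → X) ⁻¹' O), y.2⟩, fun x ⟨hxO, hxM⟩ => ?_⟩
  have hx : (⟨x, hxM⟩ : M) ∈ interior (((↑) : M → X) ⁻¹' f i) := hOeq ▸ hxO
  exact interior_subset (s := ((↑) : M → X) ⁻¹' f i) hx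

theorem IsSUCFlow.exists_almost_fixed {X : Type} [UniformSpace X] [CompactSpace X] [T2Space X]
    [Nonempty X] [MulAction (Perm ℕ) X] [ContinuousConstSMul (Perm ℕ) X]
    (hX : IsSUCFlow (Perm ℕ) X) {W : SetRel X X} (hW : W ∈ 𝓤 X) :
    ∃ z : X, ∀ u : Perm ℕ, (u • z, z) ∈ W := by
  obtain ⟨t, ht, htW⟩ := comp3_mem_uniformity hW
  obtain ⟨V, ⟨hV, hVc⟩, hVt⟩ := uniformity_hasBasis_closed.mem_iff.mp ht
  obtain ⟨M, hM⟩ := exists_minimal_isSubflow (Perm ℕ) (X := X)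
  obtain ⟨F₀, O, hO, ⟨y, hyO, hyM⟩, hOF₀⟩ :=
    hM.prop.2.1.isCompact.exists_isOpen_inter_subset_of_subset_iUnion hM.prop.1
      (f := fun F : Finset ℕ => {x | IsSUCModulus V (F : Set ℕ) x})
      (fun F => isClosed_setOf_isSUCModulus hVc _)
      (fun x _ => mem_iUnion.2 (hX.exists_isSUCModulus hV x))
  obtain ⟨I, hI⟩ := hM.exists_finset_subset_iUnion_preimage_smul hO ⟨y, hyO, hyM⟩
  have hD : (⋃ g ∈ I, ⇑(g⁻¹) '' (F₀ : Set ℕ)).Finite :=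
    I.finite_toSet.biUnion fun g _ => F₀.finite_toSet.image _
  obtain ⟨σ, -, hσ⟩ := exists_perm_fixing_avoiding finite_empty hD F₀.finite_toSet
    (empty_disjoint _)
  have hz : σ • y ∈ M := hM.prop.2.2 σ hyM
  obtain ⟨g, hgI, hgz⟩ := mem_iUnion₂.1 (hI hz)
  have hA : IsSUCModulus V (σ '' F₀) (σ • y) := (hOF₀ ⟨hyO, hyM⟩).smul σ
  have hB : IsSUCModulus V (⇑(g⁻¹) '' F₀) (σ • y) := by
    simpa using (hOF₀ ⟨hgz, hM.prop.2.2 g hz⟩).smul g⁻¹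
  have hAB : Disjoint (σ '' F₀) (⇑(g⁻¹) '' F₀) := by
    rw [Set.disjoint_left]
    rintro _ ⟨i, hi, rfl⟩ hiD
    exact hσ i hi (mem_biUnion hgI hiD)
  refine ⟨σ • y, fun u => htW ?_⟩
  exact SetRel.comp_subset_comp hVt (SetRel.comp_subset_comp hVt hVt)
    (hA.smul_mem_comp_comp hB (F₀.finite_toSet.image _) (F₀.finite_toSet.image _) hAB u)

theorem exists_forall_smul_eq_of_forall_exists_forall_smul_mem {Γ X : Type*} [Monoid Γ]
    [UniformSpace X] [CompactSpace X] [T0Space X] [MulAction Γ X] [ContinuousConstSMul Γ X]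
    (h : ∀ W ∈ 𝓤 X, ∃ x : X, ∀ g : Γ, (g • x, x) ∈ W) : ∃ x : X, ∀ g : Γ, g • x = x := by
  let C : {W : SetRel X X // W ∈ 𝓤 X ∧ IsClosed W} → Set X :=
    fun W => {x | ∀ g : Γ, (g • x, x) ∈ W.1}
  have : Nonempty {W : SetRel X X // W ∈ 𝓤 X ∧ IsClosed W} := ⟨⟨univ, univ_mem, isClosed_univ⟩⟩
  have hC : ∀ W, IsClosed (C W) := fun W => by
    simp only [C, ofPred_forall]
    exact isClosed_iInter fun g => W.2.2.preimage (by fun_prop)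
  have hdir : Directed (· ⊇ ·) C := fun W₁ W₂ =>
    ⟨⟨W₁.1 ∩ W₂.1, inter_mem W₁.2.1 W₂.2.1, W₁.2.2.inter W₂.2.2⟩,
      fun _ hx g => (hx g).1, fun _ hx g => (hx g).2⟩
  obtain ⟨x, hx⟩ := IsCompact.nonempty_iInter_of_directed_nonempty_isCompact_isClosed C hdir
    (fun W => h W.1 W.2.1) (fun W => (hC W).isCompact) hC
  refine ⟨x, fun g => eq_of_uniformity fun hW => ?_⟩
  obtain ⟨W, hW', hWsub⟩ := uniformity_hasBasis_closed.mem_iff.mp hW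
  exact hWsub (mem_iInter.1 hx ⟨W, hW'⟩ g)

/-- `S(ℕ)` has the SUC fixed point property: every nonempty compact SUC
`S(ℕ)`-flow has a fixed point. -/
theorem statement17 (X : Type) [UniformSpace X] [CompactSpace X] [T2Space X] [Nonempty X]
    [MulAction (Equiv.Perm ℕ) X] [ContinuousSMul (Equiv.Perm ℕ) X]
    (hSUC : IsSUCFlow (Equiv.Perm ℕ) X) :
    ∃ x : X, ∀ σ : Equiv.Perm ℕ, σ • x = x :=
  exists_forall_smul_eq_of_forall_exists_forall_smul_mem fun _ hW => hSUC.exists_almost_fixed hW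
end

section
/- Let G = H(C) be the homeomorphism group of the Cantor space. There exists a bounded function f : G → ℝ which is both left and right uniformly continuous but is not an SUC function; in particular SUC(G) is a proper subalgebra of UC(G). -/
open Filter Topology

/-- The Cantor space. -/
abbrev CantorSpace : Type := ℕ → Bool

/-- The group of self-homeomorphisms of a topological space, under composition. -/
instance homeoGroup {X : Type*} [TopologicalSpace X] : Group (X ≃ₜ X) where
  mul f g := g.trans f
  one := Homeomorph.refl X
  inv := Homeomorph.symm
  mul_assoc a b c := Homeomorph.ext fun _ => rfl
  one_mul f := Homeomorph.ext fun _ => rfl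
  mul_one f := Homeomorph.ext fun _ => rfl
  inv_mul_cancel f := Homeomorph.ext fun x => f.symm_apply_apply x

/-- The compact-open topology (= topology of uniform convergence) on the homeomorphism
group `H(C)` of the Cantor space. -/
instance : TopologicalSpace (CantorSpace ≃ₜ CantorSpace) :=
  TopologicalSpace.induced (fun h => (h : C(CantorSpace, CantorSpace)))
    ContinuousMap.compactOpen

variable (G : Type) [Group G] [TopologicalSpace G]

/-- `f : G → ℝ` is an SUC function: it comes from a compact SUC `G`-flow. -/
def IsSUCFunction (f : G → ℝ) : Prop :=
  ∃ (X : Type) (_ : UniformSpace X) (_ : CompactSpace X) (_ : T2Space X)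
    (_ : MulAction G X) (_ : ContinuousSMul G X),
    IsSUCFlow G X ∧ ∃ (x₀ : X) (F : X → ℝ), Continuous F ∧ ∀ g : G, f g = F (g • x₀)

/-- `f` is right uniformly continuous. -/
def RightUC (f : G → ℝ) : Prop :=
  ∀ ε : ℝ, 0 < ε → ∃ U ∈ nhds (1 : G), ∀ u ∈ U, ∀ g : G, |f (u * g) - f g| < ε

/-- `f` is left uniformly continuous. -/
def LeftUC (f : G → ℝ) : Prop :=
  ∀ ε : ℝ, 0 < ε → ∃ U ∈ nhds (1 : G), ∀ u ∈ U, ∀ g : G, |f (g * u) - f g| < ε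

/-!
Write `[w]` for the cylinder of sequences beginning with the word `w`, and take `f g = 1` if `g`
maps some point of `[1]` into `[1]`, `f g = 0` otherwise. Homeomorphisms close to the identity
preserve the first coordinate, hence `[1]`, so `f` is invariant under left and right multiplication
by them and is two-sided uniformly continuous.

Suppose `f g = F (g • x₀)` in a compact SUC flow and let `y` be a cluster point of `gₙ • x₀`, where
`gₙ` swaps `[1]` with `[0ⁿ⁺¹]`. Every neighbourhood of the identity contains the homeomorphism `u`
flipping coordinate `m + 1` on `[0ᵐ⁺¹]` for `m` large; with `k` swapping `[0ᵐ⁺¹1]` with `[1]` we get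
`f (k u gₙ) = 1` and `f (k gₙ) = 0` for all large `n`, while SUC at `y` and continuity of `F` make
`F (k u gₙ x₀) ≈ F (k u y) ≈ F (k y) ≈ F (k gₙ x₀)`.
-/

open PiNat Set
open scoped Uniformity

theorem rightUC_of_eventually_mul_left_eq {f : G → ℝ}
    (h : ∀ᶠ u in 𝓝 (1 : G), ∀ g, f (u * g) = f g) : RightUC G f :=
  fun ε hε => ⟨_, h, fun u hu g => by rwa [hu g, sub_self, abs_zero]⟩

theorem leftUC_of_eventually_mul_right_eq {f : G → ℝ}
    (h : ∀ᶠ u in 𝓝 (1 : G), ∀ g, f (g * u) = f g) : LeftUC G f :=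
  fun ε hε => ⟨_, h, fun u hu g => by rwa [hu g, sub_self, abs_zero]⟩

theorem not_isSUCFunction_of_forall_mem_nhds {f : G → ℝ} {ι : Type*} {l : Filter ι} [l.NeBot]
    (g : ι → G) {δ : ℝ} (hδ : 0 < δ)
    (h : ∀ U ∈ 𝓝 (1 : G), ∃ u ∈ U, ∃ k : G, ∀ᶠ i in l, δ ≤ dist (f (k * u * g i)) (f (k * g i))) :
    ¬ IsSUCFunction G f := by
  rintro ⟨X, _, _, _, _, _, hSUC, x₀, F, hF, hfF⟩
  have hδ3 : 0 < δ / 3 := by positivity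
  obtain ⟨y, hy⟩ := exists_clusterPt_of_compactSpace (map (fun i => g i • x₀) l)
  obtain ⟨U, hU, hUy⟩ := hSUC y _ (CompactSpace.uniformContinuous_of_continuous hF
    (Metric.dist_mem_uniformity hδ3))
  obtain ⟨u, hu, k, hk⟩ := h U hU
  have hnear : ∀ᶠ x in 𝓝 y, dist (F (k • u • x)) (F (k • u • y)) < δ / 3 ∧
      dist (F (k • x)) (F (k • y)) < δ / 3 :=
    ((hF.comp ((continuous_const_smul k).comp (continuous_const_smul u))).continuousAt.eventually
      (Metric.ball_mem_nhds _ hδ3)).and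
    ((hF.comp (continuous_const_smul k)).continuousAt.eventually (Metric.ball_mem_nhds _ hδ3))
  obtain ⟨i, ⟨hi₁, hi₂⟩, hi⟩ := ((MapClusterPt.frequently hy hnear).and_eventually hk).exists
  have hy₀ : dist (F (k • u • y)) (F (k • y)) < δ / 3 := hUy k u hu
  rw [hfF, hfF, mul_smul, mul_smul, mul_smul] at hi
  linarith [dist_triangle4 (F (k • u • g i • x₀)) (F (k • u • y)) (F (k • y)) (F (k • g i • x₀)),
    dist_comm (F (k • g i • x₀)) (F (k • y))]

section selfMeetIndicator

variable {X : Type*} [TopologicalSpace X] {A : Set X}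

open scoped Classical in
noncomputable def selfMeetIndicator (A : Set X) (g : X ≃ₜ X) : ℝ :=
  if ∃ x ∈ A, g x ∈ A then 1 else 0

theorem abs_selfMeetIndicator_le_one (A : Set X) (g : X ≃ₜ X) : |selfMeetIndicator A g| ≤ 1 := by
  unfold selfMeetIndicator
  split_ifs <;> norm_num

theorem selfMeetIndicator_mul_left {u : X ≃ₜ X} (hu : ∀ x, u x ∈ A ↔ x ∈ A) (g : X ≃ₜ X) :
    selfMeetIndicator A (u * g) = selfMeetIndicator A g := by
  unfold selfMeetIndicator
  congr 1
  simp only [Homeomorph.mul_apply, hu]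

theorem selfMeetIndicator_mul_right {u : X ≃ₜ X} (hu : ∀ x, u x ∈ A ↔ x ∈ A) (g : X ≃ₜ X) :
    selfMeetIndicator A (g * u) = selfMeetIndicator A g := by
  have hsurj := u.surjective.exists (p := fun y => y ∈ A ∧ g y ∈ A)
  simp only [hu] at hsurj
  unfold selfMeetIndicator
  congr 1
  simp only [Homeomorph.mul_apply, hsurj]

end selfMeetIndicator

namespace PiNat

theorem mem_cylinder_iff_of_mem_cylinder {E : ℕ → Type*} {x y c : ∀ n, E n} {m : ℕ}
    (h : y ∈ cylinder x m) : y ∈ cylinder c m ↔ x ∈ cylinder c m := by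
  rw [mem_cylinder_comm, mem_cylinder_iff_eq.1 h, ← mem_cylinder_comm]

theorem disjoint_cylinder_of_ne {E : ℕ → Type*} {a b : ∀ n, E n} {m n i : ℕ} (hm : i < m)
    (hn : i < n) (hab : a i ≠ b i) : Disjoint (cylinder a m) (cylinder b n) :=
  Set.disjoint_left.2 fun _ hxa hxb =>
    hab ((mem_cylinder_iff.1 hxa i hm).symm.trans (mem_cylinder_iff.1 hxb i hn))

theorem isClopen_cylinder {E : ℕ → Type*} [∀ n, TopologicalSpace (E n)]
    [∀ n, DiscreteTopology (E n)] (a : ∀ n, E n) (m : ℕ) : IsClopen (cylinder a m) :=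
  ⟨by rw [cylinder_eq_pi]; exact isClosed_set_pi fun _ _ => isClosed_discrete _,
    isOpen_cylinder _ a m⟩

theorem hasBasis_uniformity_cylinder {α : Type*} [UniformSpace α] [DiscreteUniformity α] :
    (𝓤 (ℕ → α)).HasBasis (fun _ => True) fun m => {p | p.2 ∈ cylinder p.1 m} := by
  rw [Pi.uniformity]
  simp only [DiscreteUniformity.eq_principal_setRelId, comap_principal]
  refine (hasBasis_iInf_principal_finite _).to_hasBasis (fun t ht => ?_) fun m _ => ?_
  · obtain ⟨N, hN⟩ := ht.bddAbove
    exact ⟨N + 1, trivial, fun p hp => mem_iInter₂.2 fun i hi =>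
      ((mem_cylinder_iff.1 hp) i (Nat.lt_succ_of_le (hN hi))).symm⟩
  · exact ⟨Iio m, finite_Iio m, fun p hp => mem_cylinder_iff.2 fun i hi =>
      (mem_iInter₂.1 hp i hi).symm⟩

section cylinderSwap

variable {α : Type*} {a b : ℕ → α} {m n : ℕ}

def replacePrefix (b : ℕ → α) (n m : ℕ) (x : ℕ → α) : ℕ → α :=
  fun i => if i < n then b i else x (i - n + m)

theorem replacePrefix_mem_cylinder (b : ℕ → α) (n m : ℕ) (x : ℕ → α) :
    replacePrefix b n m x ∈ cylinder b n :=
  mem_cylinder_iff.2 fun _ hi => if_pos hi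

theorem replacePrefix_replacePrefix {x : ℕ → α} (hx : x ∈ cylinder a m) (b : ℕ → α) (n : ℕ) :
    replacePrefix a m n (replacePrefix b n m x) = x := by
  funext i
  by_cases hi : i < m
  · simp [replacePrefix, hi, mem_cylinder_iff.1 hx i hi]
  · simp only [replacePrefix, hi, if_false, show ¬ i - m + n < n by omega]
    congr 1
    omega

open scoped Classical in
noncomputable def cylinderSwap (a : ℕ → α) (m : ℕ) (b : ℕ → α) (n : ℕ) (x : ℕ → α) : ℕ → α :=
  if x ∈ cylinder a m then replacePrefix b n m x
  else if x ∈ cylinder b n then replacePrefix a m n x else x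

theorem cylinderSwap_of_mem_left {x : ℕ → α} (hx : x ∈ cylinder a m) :
    cylinderSwap a m b n x = replacePrefix b n m x :=
  if_pos hx

theorem cylinderSwap_of_mem_right (hab : Disjoint (cylinder a m) (cylinder b n)) {x : ℕ → α}
    (hx : x ∈ cylinder b n) : cylinderSwap a m b n x = replacePrefix a m n x :=
  (if_neg (Set.disjoint_right.1 hab hx)).trans (if_pos hx)

theorem cylinderSwap_of_notMem {x : ℕ → α} (hxa : x ∉ cylinder a m) (hxb : x ∉ cylinder b n) :
    cylinderSwap a m b n x = x :=
  (if_neg hxa).trans (if_neg hxb)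

theorem mapsTo_cylinderSwap : MapsTo (cylinderSwap a m b n) (cylinder a m) (cylinder b n) :=
  fun x hx => cylinderSwap_of_mem_left hx ▸ replacePrefix_mem_cylinder b n m x

theorem cylinderSwap_mem_cylinder {k : ℕ} (hkm : k ≤ m) (hkn : k ≤ n) (hab : ∀ i < k, a i = b i)
    (x : ℕ → α) : cylinderSwap a m b n x ∈ cylinder x k := by
  unfold cylinderSwap
  split_ifs with hxa hxb
  · refine mem_cylinder_iff.2 fun i hi => ?_
    simp [replacePrefix, show i < n by omega, ← hab i hi, mem_cylinder_iff.1 hxa i (by omega)]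
  · refine mem_cylinder_iff.2 fun i hi => ?_
    simp [replacePrefix, show i < m by omega, hab i hi, mem_cylinder_iff.1 hxb i (by omega)]
  · exact self_mem_cylinder x k

theorem cylinderSwap_involutive (hab : Disjoint (cylinder a m) (cylinder b n)) :
    Function.Involutive (cylinderSwap a m b n) := by
  intro x
  by_cases hxa : x ∈ cylinder a m
  · have hy := replacePrefix_mem_cylinder b n m x
    rw [cylinderSwap_of_mem_left hxa, cylinderSwap_of_mem_right hab hy,
      replacePrefix_replacePrefix hxa]
  by_cases hxb : x ∈ cylinder b n
  · have hy := replacePrefix_mem_cylinder a m n x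
    rw [cylinderSwap_of_mem_right hab hxb, cylinderSwap_of_mem_left hy,
      replacePrefix_replacePrefix hxb]
  rw [cylinderSwap_of_notMem hxa hxb, cylinderSwap_of_notMem hxa hxb]

variable [TopologicalSpace α]

theorem continuous_replacePrefix (b : ℕ → α) (n m : ℕ) : Continuous (replacePrefix b n m) :=
  continuous_pi fun _ => continuous_const.if_const _ (continuous_apply _)

variable [DiscreteTopology α]

open scoped Classical in
theorem continuous_cylinderSwap : Continuous (cylinderSwap a m b n) := by
  have hfr (c : ℕ → α) (k : ℕ) (x : ℕ → α) (hx : x ∈ frontier {y | y ∈ cylinder c k}) : False := by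
    rw [ofPred_mem_eq, (isClopen_cylinder c k).frontier_eq] at hx
    exact notMem_empty x hx
  exact (continuous_replacePrefix b n m).if (fun x hx => (hfr _ _ x hx).elim)
    ((continuous_replacePrefix a m n).if (fun x hx => (hfr _ _ x hx).elim) continuous_id)

noncomputable def cylinderSwapHomeomorph (hab : Disjoint (cylinder a m) (cylinder b n)) :
    (ℕ → α) ≃ₜ (ℕ → α) where
  toEquiv := (cylinderSwap_involutive hab).toPerm _
  continuous_toFun := continuous_cylinderSwap
  continuous_invFun := continuous_cylinderSwap

end cylinderSwap

end PiNat

namespace CantorSpace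

theorem hasBasis_nhds_one :
    (𝓝 (1 : CantorSpace ≃ₜ CantorSpace)).HasBasis (fun _ => True)
      fun m => {h | ∀ x, h x ∈ cylinder x m} := by
  rw [nhds_induced]
  exact (nhds_basis_uniformity'
    hasBasis_uniformity_cylinder.compactConvergenceUniformity_of_compact).comap _

theorem eventually_nhds_one_mem_cylinder_iff (c : CantorSpace) (m : ℕ) :
    ∀ᶠ u in 𝓝 (1 : CantorSpace ≃ₜ CantorSpace), ∀ x, u x ∈ cylinder c m ↔ x ∈ cylinder c m :=
  Filter.mem_of_superset (hasBasis_nhds_one.mem_of_mem trivial)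
    fun _ hu x => mem_cylinder_iff_of_mem_cylinder (hu x)

-- `[0ᵐ⁺¹1]` is `cylinder (fun i => decide (i = m + 1)) (m + 2)`.
noncomputable def swapHeadZeros (n : ℕ) : CantorSpace ≃ₜ CantorSpace :=
  cylinderSwapHomeomorph (a := fun _ => true) (m := 1) (b := fun _ => false) (n := n + 1)
    (disjoint_cylinder_of_ne (i := 0) one_pos n.succ_pos (by simp))

noncomputable def flipAfterZeros (m : ℕ) : CantorSpace ≃ₜ CantorSpace :=
  cylinderSwapHomeomorph (a := fun _ => false) (m := m + 2) (b := fun i => decide (i = m + 1))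
    (n := m + 2) (disjoint_cylinder_of_ne (i := m + 1) (by omega) (by omega) (by simp))

noncomputable def swapUnitHead (m : ℕ) : CantorSpace ≃ₜ CantorSpace :=
  cylinderSwapHomeomorph (a := fun i => decide (i = m + 1)) (m := m + 2) (b := fun _ => true)
    (n := 1) (disjoint_cylinder_of_ne (i := 0) (by omega) one_pos (by simp))

theorem flipAfterZeros_mem_cylinder (m : ℕ) (x : CantorSpace) :
    flipAfterZeros m x ∈ cylinder x m :=
  cylinderSwap_mem_cylinder (by omega) (by omega) (fun i hi => by simp; omega) x

theorem selfMeetIndicator_swapUnitHead_flipAfterZeros {m n : ℕ} (hmn : m + 1 ≤ n) :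
    selfMeetIndicator (cylinder (fun _ => true) 1)
      (swapUnitHead m * flipAfterZeros m * swapHeadZeros n) = 1 :=
  if_pos ⟨fun _ => true, self_mem_cylinder _ _, mapsTo_cylinderSwap <| mapsTo_cylinderSwap <|
    cylinder_anti _ (by omega) <| mapsTo_cylinderSwap <| self_mem_cylinder _ _⟩

theorem selfMeetIndicator_swapUnitHead {m n : ℕ} (hmn : m + 1 ≤ n) :
    selfMeetIndicator (cylinder (fun _ => true) 1) (swapUnitHead m * swapHeadZeros n) = 0 := by
  refine if_neg fun ⟨x, hx, hgx⟩ => ?_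
  have hy : swapHeadZeros n x ∈ cylinder (fun _ => false) (n + 1) := mapsTo_cylinderSwap hx
  have hyA : swapHeadZeros n x ∉ cylinder (fun _ => true) 1 := Set.disjoint_right.1
    (disjoint_cylinder_of_ne (i := 0) one_pos n.succ_pos (by simp)) hy
  have hyU : swapHeadZeros n x ∉ cylinder (fun i => decide (i = m + 1)) (m + 2) :=
    Set.disjoint_right.1 (disjoint_cylinder_of_ne (i := m + 1) (by omega) (by omega) (by simp)) hy
  rw [Homeomorph.mul_apply] at hgx
  exact hyA (cylinderSwap_of_notMem hyU hyA ▸ hgx)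

end CantorSpace

open CantorSpace in
/-- On the homeomorphism group `G = H(C)` of the Cantor space there is a
bounded function which is both left and right uniformly continuous but not an SUC
function; in particular `SUC(G) ⊊ UC(G)`. -/
theorem statement18 :
    ∃ f : (CantorSpace ≃ₜ CantorSpace) → ℝ,
      (∃ M : ℝ, ∀ g : CantorSpace ≃ₜ CantorSpace, |f g| ≤ M) ∧
      LeftUC (CantorSpace ≃ₜ CantorSpace) f ∧
      RightUC (CantorSpace ≃ₜ CantorSpace) f ∧
      ¬ IsSUCFunction (CantorSpace ≃ₜ CantorSpace) f := by
  have hstab := eventually_nhds_one_mem_cylinder_iff (fun _ => true) 1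
  refine ⟨selfMeetIndicator (cylinder (fun _ => true) 1),
    ⟨1, abs_selfMeetIndicator_le_one _⟩,
    leftUC_of_eventually_mul_right_eq _ (hstab.mono fun _ hu => selfMeetIndicator_mul_right hu),
    rightUC_of_eventually_mul_left_eq _ (hstab.mono fun _ hu => selfMeetIndicator_mul_left hu),
    not_isSUCFunction_of_forall_mem_nhds _ (l := atTop) swapHeadZeros one_pos fun U hU => ?_⟩
  obtain ⟨m, -, hmU⟩ := hasBasis_nhds_one.mem_iff.1 hU
  refine ⟨flipAfterZeros m, hmU (flipAfterZeros_mem_cylinder m), swapUnitHead m,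
    eventually_atTop.2 ⟨m + 1, fun n hn => ?_⟩⟩
  rw [selfMeetIndicator_swapUnitHead_flipAfterZeros hn, selfMeetIndicator_swapUnitHead hn,
    Real.dist_0_eq_abs, abs_one]
end

section
/- The group G = H(C) of homeomorphisms of the Cantor space has the SUC fixed point property: every nonempty compact SUC G-flow X contains a point x with g•x = x for all g ∈ G. -/
open Filter Topology

variable (G : Type) [Group G] [TopologicalSpace G]

/-!
Every finite family `g₁, …, gₙ` in `H(C)` is a limit of simultaneous conjugates `p uᵢ p⁻¹`, with
one `p` and all `uᵢ` in a given neighbourhood `U` of the identity. Indeed `U` contains the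
homeomorphisms fixing the first `N` coordinates, while to depth `M` each `gᵢ` is a surjection
`{0,1}^L → {0,1}^M` of prefixes; such a surjection is realised by a homeomorphism acting only on
the coordinates outside a block `[K, K + N)` (the Cantor space absorbs finite discrete factors,
`C ≅ C × Fin q`), and `p` moves the initial block `[0, N)` onto `[K, K + N)`.

In an SUC flow, `p uᵢ p⁻¹ • p • y = p • uᵢ • y` stays `V`-close to `p • y`, so a cluster point `w`
of the points `p • y` satisfies `(gᵢ • w, w) ∈ closure V`; compactness over all entourages `V`
gives a common fixed point.
-/

open Set Uniformity Function

theorem hasBasis_uniformity_eqOn_Iio {E : Type*} [UniformSpace E] [DiscreteUniformity E] :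
    (𝓤 (ℕ → E)).HasBasis (fun _ => True) fun n => {p | EqOn p.1 p.2 (Iio n)} := by
  have hpi : 𝓤 (ℕ → E) = ⨅ i, 𝓟 {p : (ℕ → E) × (ℕ → E) | p.1 i = p.2 i} := by
    simp only [Pi.uniformity, DiscreteUniformity.eq_principal_setRelId, comap_principal]
    rfl
  rw [hpi]
  refine (hasBasis_iInf_principal_finite _).to_hasBasis (fun I hI => ?_) fun n _ => ?_
  · obtain ⟨n, hn⟩ := hI.bddAbove
    exact ⟨n + 1, trivial, fun p hp => mem_iInter₂.2 fun i hi =>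
      hp (Nat.lt_succ_of_le (hn hi))⟩
  · exact ⟨Iio n, finite_Iio n, fun p hp i hi => mem_iInter₂.1 hp i hi⟩

theorem UniformContinuous.exists_eqOn_Iio {E F : Type*} [UniformSpace E] [DiscreteUniformity E]
    [UniformSpace F] [DiscreteUniformity F] {f : (ℕ → E) → ℕ → F} (hf : UniformContinuous f)
    (m : ℕ) : ∃ n, ∀ x y, EqOn x y (Iio n) → EqOn (f x) (f y) (Iio m) := by
  obtain ⟨n, -, hn⟩ :=
    (hasBasis_uniformity_eqOn_Iio.uniformContinuous_iff hasBasis_uniformity_eqOn_Iio).1 hf m trivial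
  exact ⟨n, hn⟩

theorem ContinuousMap.hasBasis_nhds_eqOn_Iio {X E : Type*} [TopologicalSpace X] [CompactSpace X]
    [UniformSpace E] [DiscreteUniformity E] (f : C(X, ℕ → E)) :
    (𝓝 f).HasBasis (fun _ => True) fun n => {h | ∀ x, EqOn (h x) (f x) (Iio n)} :=
  nhds_basis_uniformity hasBasis_uniformity_eqOn_Iio.compactConvergenceUniformity_of_compact

def extractBlock (X : Type*) [TopologicalSpace X] (k n : ℕ) :
    (ℕ → X) ≃ₜ (ℕ → X) × (Fin n → X) where
  toFun x := (fun i => x (if i < k then i else i + n), fun j => x (k + j))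
  invFun p i :=
    if hk : i < k then p.1 i else if h : i < k + n then p.2 ⟨i - k, by omega⟩ else p.1 (i - n)
  left_inv x := by
    funext i
    dsimp only
    split_ifs <;> congr 1 <;> omega
  right_inv p := by
    ext i
    · dsimp only
      split_ifs <;> first | rfl | (exfalso; omega) | simp
    · simp
  continuous_toFun := by fun_prop
  continuous_invFun := continuous_pi fun i => by split_ifs <;> fun_prop

namespace extractBlock

variable {X : Type*} [TopologicalSpace X] {k n : ℕ}

@[simp] theorem apply_snd (x : ℕ → X) (j : Fin n) : (extractBlock X k n x).2 j = x (k + j) := rfl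

theorem apply_fst_of_lt (x : ℕ → X) {i : ℕ} (hi : i < k) : (extractBlock X k n x).1 i = x i := by
  simp [extractBlock, hi]

theorem symm_apply_of_lt (p : (ℕ → X) × (Fin n → X)) {i : ℕ} (hi : i < k) :
    (extractBlock X k n).symm p i = p.1 i := by
  simp [extractBlock, hi]

@[simp] theorem symm_apply_add (p : (ℕ → X) × (Fin n → X)) (j : Fin n) :
    (extractBlock X k n).symm p (k + j) = p.2 j := by
  simp [extractBlock]

end extractBlock

theorem eqOn_Iio_iff_extractBlock_snd_eq {X : Type*} [TopologicalSpace X] {x y : ℕ → X} {n : ℕ} :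
    EqOn x y (Iio n) ↔ (extractBlock X 0 n x).2 = (extractBlock X 0 n y).2 := by
  refine ⟨fun h => funext fun j => by simpa using h j.2, fun h i hi => ?_⟩
  simpa using congrFun h ⟨i, hi⟩

theorem nonempty_prod_fin_succ_homeomorph {X : Type*} [TopologicalSpace X] (e : X ⊕ X ≃ₜ X) :
    ∀ q : ℕ, Nonempty (X × Fin (q + 1) ≃ₜ X)
  | 0 => ⟨Homeomorph.prodUnique X (Fin 1)⟩
  | q + 1 => by
    obtain ⟨ih⟩ := nonempty_prod_fin_succ_homeomorph e q
    exact ⟨((Homeomorph.refl X).prodCongr finSumFinEquiv.symm.toHomeomorphOfDiscrete).trans <|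
      Homeomorph.prodSumDistrib.trans <| (ih.sumCongr (Homeomorph.prodUnique X (Fin 1))).trans e⟩

theorem nonempty_prod_homeomorph {X α : Type*} [TopologicalSpace X] [TopologicalSpace α]
    [DiscreteTopology α] [Finite α] [Nonempty α] (e : X ⊕ X ≃ₜ X) : Nonempty (X × α ≃ₜ X) := by
  obtain ⟨n, ⟨f⟩⟩ := Finite.exists_equiv_fin α
  obtain ⟨q, rfl⟩ : ∃ q, n = q + 1 :=
    Nat.exists_eq_succ_of_ne_zero (Fin.pos_iff_nonempty.2 f.symm.nonempty).ne'
  obtain ⟨g⟩ := nonempty_prod_fin_succ_homeomorph e q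
  exact ⟨((Homeomorph.refl X).prodCongr f.toHomeomorphOfDiscrete).trans g⟩

theorem exists_homeomorph_prod_snd_eq {X α β : Type*} [TopologicalSpace X] [TopologicalSpace α]
    [DiscreteTopology α] [Finite α] [TopologicalSpace β] [DiscreteTopology β] (e : X ⊕ X ≃ₜ X)
    {φ : α → β} (hφ : Surjective φ) : ∃ F : X × α ≃ₜ X × β, ∀ p, (F p).2 = φ p.2 := by
  have E (b : β) : X × {a // φ a = b} ≃ₜ X :=
    have : Nonempty {a // φ a = b} := nonempty_subtype.2 (hφ b)
    (nonempty_prod_homeomorph e).some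
  refine ⟨{
    toFun p := (E (φ p.2) (p.1, ⟨p.2, rfl⟩), φ p.2)
    invFun p := (((E p.2).symm p.1).1, ((E p.2).symm p.1).2.1)
    left_inv p := by simp
    right_inv p := by
      obtain ⟨y, b⟩ := p
      dsimp only
      generalize hz : (E b).symm y = z
      obtain ⟨x, a, rfl⟩ := z
      rw [Homeomorph.symm_apply_eq] at hz
      rw [hz]
    continuous_toFun := continuous_prod_of_discrete_right.2 fun a => by
      change Continuous fun x => (E (φ a) (x, ⟨a, rfl⟩), φ a)
      fun_prop
    continuous_invFun := continuous_prod_of_discrete_right.2 fun b => by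
      dsimp only
      exact (E b).symm.continuous.fst.prodMk
        (continuous_subtype_val.comp (E b).symm.continuous.snd) }, fun p => rfl⟩

namespace CantorSpace

theorem hasBasis_nhds_homeomorph (f : CantorSpace ≃ₜ CantorSpace) :
    (𝓝 f).HasBasis (fun _ => True) fun n => {h | ∀ x, EqOn (h x) (f x) (Iio n)} := by
  rw [nhds_induced]
  exact (ContinuousMap.hasBasis_nhds_eqOn_Iio (f : C(CantorSpace, CantorSpace))).comap _

def sumSelfHomeomorph : CantorSpace ⊕ CantorSpace ≃ₜ CantorSpace :=
  ((Homeomorph.prodUnique CantorSpace Unit).symm.sumCongr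
    (Homeomorph.prodUnique CantorSpace Unit).symm).trans <|
  Homeomorph.prodSumDistrib.symm.trans <|
  ((Homeomorph.refl CantorSpace).prodCongr
    (Equiv.boolEquivPUnitSumPUnit.symm.toHomeomorphOfDiscrete.trans
      (Homeomorph.funUnique (Fin 1) Bool).symm)).trans (extractBlock Bool 0 1).symm

theorem exists_homeomorph_eqOn_Iio {f : CantorSpace → CantorSpace} (hf : Surjective f) {l m : ℕ}
    (hlm : ∀ x y, EqOn x y (Iio l) → EqOn (f x) (f y) (Iio m)) :
    ∃ F : CantorSpace ≃ₜ CantorSpace, ∀ x, EqOn (F x) (f x) (Iio m) := by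
  set extend : (Fin l → Bool) → CantorSpace :=
    fun w => (extractBlock Bool 0 l).symm (fun _ => false, w)
  have hextend (x : CantorSpace) : EqOn (extend (extractBlock Bool 0 l x).2) x (Iio l) := by
    rw [eqOn_Iio_iff_extractBlock_snd_eq]
    simp [extend]
  set φ : (Fin l → Bool) → Fin m → Bool := fun w => (extractBlock Bool 0 m (f (extend w))).2
  have hφ (x : CantorSpace) : φ (extractBlock Bool 0 l x).2 = (extractBlock Bool 0 m (f x)).2 :=
    eqOn_Iio_iff_extractBlock_snd_eq.1 (hlm _ _ (hextend x))
  have hφs : Surjective φ := by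
    intro v
    obtain ⟨x, hx⟩ := hf ((extractBlock Bool 0 m).symm (fun _ => false, v))
    exact ⟨_, (hφ x).trans (by simp [hx])⟩
  obtain ⟨Ψ, hΨ⟩ := exists_homeomorph_prod_snd_eq sumSelfHomeomorph hφs
  refine ⟨(extractBlock Bool 0 l).trans (Ψ.trans (extractBlock Bool 0 m).symm), fun x => ?_⟩
  rw [eqOn_Iio_iff_extractBlock_snd_eq, ← hφ, ← hΨ]
  simp

def fixInitialBlock (N : ℕ) (F : CantorSpace ≃ₜ CantorSpace) : CantorSpace ≃ₜ CantorSpace :=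
  (extractBlock Bool 0 N).trans ((F.prodCongr (.refl _)).trans (extractBlock Bool 0 N).symm)

def moveInitialBlock (K N : ℕ) : CantorSpace ≃ₜ CantorSpace :=
  (extractBlock Bool 0 N).trans (extractBlock Bool K N).symm

theorem fixInitialBlock_eqOn (N : ℕ) (F : CantorSpace ≃ₜ CantorSpace) (x : CantorSpace) :
    EqOn (fixInitialBlock N F x) x (Iio N) := by
  rw [eqOn_Iio_iff_extractBlock_snd_eq]
  simp [fixInitialBlock]

theorem moveInitialBlock_conj_fixInitialBlock_eqOn (K N : ℕ) (F : CantorSpace ≃ₜ CantorSpace)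
    (x : CantorSpace) :
    EqOn ((moveInitialBlock K N * fixInitialBlock N F * (moveInitialBlock K N)⁻¹) x)
      (F (extractBlock Bool K N x).1) (Iio K) := by
  intro i hi
  have hconj : (moveInitialBlock K N * fixInitialBlock N F * (moveInitialBlock K N)⁻¹) x =
      (extractBlock Bool K N).symm (Prod.map F id (extractBlock Bool K N x)) := by
    simp [moveInitialBlock, fixInitialBlock]
  rw [hconj, extractBlock.symm_apply_of_lt _ hi, Prod.map_fst]

theorem id_mem_closure_conj {U : Set (CantorSpace ≃ₜ CantorSpace)} (hU : U ∈ 𝓝 1) :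
    (id : (CantorSpace ≃ₜ CantorSpace) → CantorSpace ≃ₜ CantorSpace) ∈
      closure {k | ∃ p, ∀ g, p⁻¹ * k g * p ∈ U} := by
  obtain ⟨N, -, hN⟩ := (hasBasis_nhds_homeomorph 1).mem_iff.1 hU
  have hbasis := hasBasis_pi fun g : CantorSpace ≃ₜ CantorSpace => hasBasis_nhds_homeomorph g
  rw [← nhds_pi] at hbasis
  refine (mem_closure_iff_nhds_basis hbasis).2 fun ⟨I, M⟩ ⟨hI, _⟩ => ?_
  have hmod (g : CantorSpace ≃ₜ CantorSpace) :
      ∃ l, ∀ x y, EqOn x y (Iio l) → EqOn (g x) (g y) (Iio (M g)) :=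
    (CompactSpace.uniformContinuous_of_continuous g.continuous).exists_eqOn_Iio (M g)
  choose l hl using hmod
  choose F hF using fun g => exists_homeomorph_eqOn_Iio g.surjective (hl g)
  obtain ⟨K, hK⟩ := (hI.image fun g => M g + l g).bddAbove
  set p := moveInitialBlock K N
  refine ⟨fun g => p * fixInitialBlock N (F g) * p⁻¹, ⟨p, fun g => hN ?_⟩, fun g hg x => ?_⟩
  · simpa [mul_assoc] using fixInitialBlock_eqOn N (F g)
  · have hKg : M g + l g ≤ K := hK (mem_image_of_mem _ hg)
    have hx : EqOn (extractBlock Bool K N x).1 x (Iio (l g)) := fun i hi =>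
      extractBlock.apply_fst_of_lt x (by simp at hi; omega)
    exact ((moveInitialBlock_conj_fixInitialBlock_eqOn K N (F g) x).mono
      (Iio_subset_Iio (show M g ≤ K by omega))).trans ((hF g _).trans (hl g _ _ hx))

end CantorSpace

section FixedPoint

variable {G}

theorem IsSUCFlow.exists_forall_smul_mem_closure
    (hG : ∀ U ∈ 𝓝 (1 : G), id ∈ closure {k : G → G | ∃ p, ∀ g, p⁻¹ * k g * p ∈ U})
    {X : Type} [UniformSpace X] [CompactSpace X] [MulAction G X] [ContinuousSMul G X]
    (hSUC : IsSUCFlow G X) (y₀ : X) {V : Set (X × X)} (hV : V ∈ 𝓤 X) :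
    ∃ w : X, ∀ g : G, (g • w, w) ∈ closure V := by
  obtain ⟨U, hU, hUV⟩ := hSUC y₀ V hV
  set A : Set (X × (G → G)) := {q | ∃ p : G, q.1 = p • y₀ ∧ ∀ g, p⁻¹ * q.2 g * p ∈ U}
  have hA : {k : G → G | ∃ p, ∀ g, p⁻¹ * k g * p ∈ U} ⊆ Prod.snd '' A :=
    fun k ⟨p, hp⟩ => ⟨(p • y₀, k), ⟨p, rfl, hp⟩, rfl⟩
  -- `Prod.snd` is a closed map since `X` is compact, so `id` lifts to some `(w, id) ∈ closure A`.
  obtain ⟨⟨w, _⟩, hw, rfl⟩ := isClosedMap_snd_of_compactSpace.closure_image_subset A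
    (closure_mono hA (hG U hU))
  refine ⟨w, fun g => map_mem_closure (f := fun q : X × (G → G) => (q.2 g • q.1, q.1))
    (by fun_prop) hw ?_⟩
  rintro ⟨_, k⟩ ⟨p, rfl, hp⟩
  have hconj : p * (p⁻¹ * k g * p) = k g * p := by group
  simpa only [smul_smul, hconj] using hUV p _ (hp g)

theorem IsSUCFlow.exists_fixedPoint
    (hG : ∀ U ∈ 𝓝 (1 : G), id ∈ closure {k : G → G | ∃ p, ∀ g, p⁻¹ * k g * p ∈ U})
    {X : Type} [UniformSpace X] [CompactSpace X] [T2Space X] [Nonempty X] [MulAction G X]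
    [ContinuousSMul G X] (hSUC : IsSUCFlow G X) : ∃ x : X, ∀ g : G, g • x = x := by
  obtain ⟨y₀⟩ := ‹Nonempty X›
  set Z : {V // V ∈ 𝓤 X} → Set X := fun V => {x | ∀ g : G, (g • x, x) ∈ closure V.1}
  have hZ_closed (V) : IsClosed (Z V) := by
    simp only [Z, ofPred_forall]
    exact isClosed_iInter fun g => isClosed_closure.preimage (by fun_prop)
  have hZ_dir : Directed (· ⊇ ·) Z := fun V W =>
    ⟨⟨V.1 ∩ W.1, inter_mem V.2 W.2⟩, fun _ hx g => closure_mono inter_subset_left (hx g),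
      fun _ hx g => closure_mono inter_subset_right (hx g)⟩
  obtain ⟨w, hw⟩ := IsCompact.nonempty_iInter_of_directed_nonempty_isCompact_isClosed Z hZ_dir
    (fun V => hSUC.exists_forall_smul_mem_closure hG y₀ V.2) (fun V => (hZ_closed V).isCompact)
    hZ_closed
  exact ⟨w, fun g => eq_of_uniformity_basis uniformity_hasBasis_closure fun hV =>
    mem_iInter.1 hw ⟨_, hV⟩ g⟩

end FixedPoint

/-- The group `H(C)` of homeomorphisms of the Cantor space has the SUC
fixed point property: every nonempty compact SUC `H(C)`-flow has a fixed point. -/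
theorem statement19 (X : Type) [UniformSpace X] [CompactSpace X] [T2Space X] [Nonempty X]
    [MulAction (CantorSpace ≃ₜ CantorSpace) X]
    [ContinuousSMul (CantorSpace ≃ₜ CantorSpace) X]
    (hSUC : IsSUCFlow (CantorSpace ≃ₜ CantorSpace) X) :
    ∃ x : X, ∀ g : CantorSpace ≃ₜ CantorSpace, g • x = x :=
  hSUC.exists_fixedPoint fun _ => CantorSpace.id_mem_closure_conj
end
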